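/- arXiv:1207.0042 — 4 statements merged into one kernel-verified Lean document; each statement's English description precedes it below -/
import Mathlib

section
/- Define a graph G on the subsets of {1, ..., n} by joining K and K' if they differ by insertion or deletion of a single element (the edge graph of the n-cube, which is the edge graph of the secondary polytope of {0,...,n+1}). Define γ(K) = min(K ∪ {n+1}). Then for every subset J ⊆ {2, ..., n}, there is exactly one path K_0, K_1, ..., K_r in G with K_0 = {1} ∪ J, K_r = ∅, and γ(K_i) < γ(K_{i+1}) for all i; it is given by successively deleting the smallest remaining element. Consequently, the γ-monotone paths in G from the set γ^{-1}(1) of minimizers to ∅ are in bijection with subsets of {2,...,n}, and there are exactly 2^{n−1} of them. -/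
/-!
For `K ⊆ {1,…,n}` nonempty, `γ K = min K`, while `γ ∅ = n + 1`. Inserting an element never
raises `γ`, and deleting `x` raises it only if `x = min K`. So every step of a `γ`-monotone
path deletes the current minimum: from each `K` there is exactly one such path, and it ends
at `∅`. The minimizers of `γ` are the sets containing `1`, that is the sets `{1} ∪ J` with
`J ⊆ {2,…,n}`, and the monotone paths from them are counted by their starting points.
-/

open Finset

/-- Adjacency in the edge graph of the `n`-cube on subsets of `{1,…,n}`:
two subsets are adjacent iff they differ by insertion/deletion of one element. -/
def CubeAdj (K K' : Finset ℕ) : Prop :=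
  ∃ x, (x ∉ K ∧ K' = insert x K) ∨ (x ∉ K' ∧ K = insert x K')

/-- `γ(K) = min (K ∪ {n+1})`. -/
def gammaMin (n : ℕ) (K : Finset ℕ) : ℕ :=
  (insert (n + 1) K).min' (Finset.insert_nonempty _ _)

/-- A `γ`-monotone path in the cube graph from `K₀` to `∅`. -/
def IsMonotonePath (n : ℕ) (K₀ : Finset ℕ) (L : List (Finset ℕ)) : Prop :=
  (∀ K ∈ L, K ⊆ Finset.Icc 1 n) ∧
  L.Chain' CubeAdj ∧
  L.Chain' (fun K K' => gammaMin n K < gammaMin n K') ∧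
  L.head? = some K₀ ∧ L.getLast? = some ∅

lemma List.IsChain.and {α : Type*} {R S : α → α → Prop} {l : List α} (hR : l.IsChain R)
    (hS : l.IsChain S) : l.IsChain fun a b => R a b ∧ S a b := by
  rw [List.isChain_iff_getElem] at *
  exact fun i hi => ⟨hR i hi, hS i hi⟩

section DeleteMin

variable {α : Type*} [LinearOrder α]

def IsMinDeletion (K K' : Finset α) : Prop :=
  ∃ h : K.Nonempty, K' = K.erase (K.min' h)

def deleteMinPath (K : Finset α) : List (Finset α) :=
  if h : K.Nonempty then K :: deleteMinPath (K.erase (K.min' h)) else [∅]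
termination_by K.card
decreasing_by exact card_erase_lt_of_mem (K.min'_mem h)

lemma deleteMinPath_of_nonempty {K : Finset α} (h : K.Nonempty) :
    deleteMinPath K = K :: deleteMinPath (K.erase (K.min' h)) := by
  rw [deleteMinPath, dif_pos h]

@[simp]
lemma deleteMinPath_empty : deleteMinPath (∅ : Finset α) = [∅] := by
  rw [deleteMinPath, dif_neg (by simp)]

lemma head?_deleteMinPath (K : Finset α) : (deleteMinPath K).head? = some K := by
  rcases K.eq_empty_or_nonempty with rfl | h
  · simp
  · simp [deleteMinPath_of_nonempty h]

lemma deleteMinPath_injective : Function.Injective (deleteMinPath (α := α)) := fun K K' h =>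
  Option.some_injective _ (by rw [← head?_deleteMinPath K, h, head?_deleteMinPath])

lemma getLast?_deleteMinPath (K : Finset α) : (deleteMinPath K).getLast? = some ∅ := by
  induction K using strongInduction with
  | H K ih =>
    rcases K.eq_empty_or_nonempty with rfl | h
    · simp
    · rw [deleteMinPath_of_nonempty h, List.getLast?_cons,
        ih _ (erase_ssubset (K.min'_mem h))]
      rfl

lemma subset_of_mem_deleteMinPath {K A : Finset α} (hA : A ∈ deleteMinPath K) : A ⊆ K := by
  induction K using strongInduction with
  | H K ih =>
    rcases K.eq_empty_or_nonempty with rfl | h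
    · simp_all
    · rw [deleteMinPath_of_nonempty h, List.mem_cons] at hA
      rcases hA with rfl | hA
      · exact subset_rfl
      · exact (ih _ (erase_ssubset (K.min'_mem h)) hA).trans (erase_subset _ _)

lemma isChain_isMinDeletion_deleteMinPath (K : Finset α) :
    (deleteMinPath K).IsChain IsMinDeletion := by
  induction K using strongInduction with
  | H K ih =>
    rcases K.eq_empty_or_nonempty with rfl | h
    · simp
    · rw [deleteMinPath_of_nonempty h, List.isChain_cons]
      refine ⟨fun B hB => ?_, ih _ (erase_ssubset (K.min'_mem h))⟩
      rw [head?_deleteMinPath, Option.mem_some_iff] at hB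
      exact ⟨h, hB.symm⟩

lemma eq_deleteMinPath_of_isChain {L : List (Finset α)} {K : Finset α}
    (hL : L.IsChain IsMinDeletion) (hhead : L.head? = some K) (hlast : L.getLast? = some ∅) :
    L = deleteMinPath K := by
  induction L generalizing K with
  | nil => simp at hhead
  | cons A L ih =>
    obtain rfl : A = K := by simpa using hhead
    cases L with
    | nil =>
      obtain rfl : A = ∅ := by simpa using hlast
      simp
    | cons B L =>
      obtain ⟨⟨h, rfl⟩, hL⟩ := List.isChain_cons_cons.mp hL
      rw [deleteMinPath_of_nonempty h, ih hL rfl (by rwa [List.getLast?_cons_cons] at hlast)]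

end DeleteMin

lemma cubeAdj_erase {K : Finset ℕ} {x : ℕ} (hx : x ∈ K) : CubeAdj K (K.erase x) :=
  ⟨x, .inr ⟨notMem_erase x K, (insert_erase hx).symm⟩⟩

section Gamma

variable {n : ℕ} {K : Finset ℕ}

lemma gammaMin_insert (x : ℕ) :
    gammaMin n (insert x K) = min x (gammaMin n K) := by
  unfold gammaMin
  convert min'_insert x (insert (n + 1) K) (insert_nonempty _ _) using 2
  exact insert_comm (n + 1) x K

lemma gammaMin_eq_min' (hK : K ⊆ Icc 1 n) (h : K.Nonempty) : gammaMin n K = K.min' h := by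
  have : K.min' h ≤ n := (mem_Icc.mp (hK (K.min'_mem h))).2
  rw [gammaMin, min'_insert _ _ h]
  omega

lemma gammaMin_lt_gammaMin_erase_min' (hK : K ⊆ Icc 1 n) (h : K.Nonempty) :
    gammaMin n K < gammaMin n (K.erase (K.min' h)) := by
  rw [gammaMin_eq_min' hK h, gammaMin, lt_min'_iff]
  intro y hy
  rcases mem_insert.mp hy with rfl | hy
  · have := (mem_Icc.mp (hK (K.min'_mem h))).2
    omega
  · exact lt_of_le_of_ne (K.min'_le y (mem_of_mem_erase hy)) (ne_of_mem_erase hy).symm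

lemma isMinDeletion_of_cubeAdj (hK : K ⊆ Icc 1 n) {K' : Finset ℕ} (hadj : CubeAdj K K')
    (hlt : gammaMin n K < gammaMin n K') : IsMinDeletion K K' := by
  obtain ⟨x, ⟨-, rfl⟩ | ⟨hxK', rfl⟩⟩ := hadj
  · rw [gammaMin_insert] at hlt
    exact absurd hlt (min_le_right _ _).not_gt
  · have h := insert_nonempty x K'
    rw [gammaMin_insert] at hlt
    have hx : (insert x K').min' h = x := by
      rw [← gammaMin_eq_min' hK h, gammaMin_insert]
      omega
    exact ⟨h, by rw [hx, erase_insert hxK']⟩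

lemma gammaMin_eq_one_iff (hn : 1 ≤ n) (hK : K ⊆ Icc 1 n) : gammaMin n K = 1 ↔ 1 ∈ K := by
  rcases K.eq_empty_or_nonempty with rfl | h
  · simp only [gammaMin, insert_empty, min'_singleton, notMem_empty, iff_false]
    omega
  · rw [gammaMin_eq_min' hK h]
    refine ⟨fun h1 => h1 ▸ K.min'_mem h, fun h1 => ?_⟩
    exact le_antisymm (K.min'_le 1 h1) (mem_Icc.mp (hK (K.min'_mem h))).1

end Gamma

section MonotonePath

variable {n : ℕ} {K : Finset ℕ} {L : List (Finset ℕ)}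

lemma IsMonotonePath.subset_Icc (hL : IsMonotonePath n K L) : K ⊆ Icc 1 n :=
  hL.1 K (List.mem_of_mem_head? hL.2.2.2.1)

lemma IsMonotonePath.isChain_isMinDeletion (hL : IsMonotonePath n K L) :
    L.IsChain IsMinDeletion :=
  List.IsChain.imp_of_mem_imp (fun A _ hA _ h => isMinDeletion_of_cubeAdj (hL.1 A hA) h.1 h.2)
    (List.IsChain.and hL.2.1 hL.2.2.1)

lemma IsMonotonePath.eq_deleteMinPath (hL : IsMonotonePath n K L) : L = deleteMinPath K :=
  eq_deleteMinPath_of_isChain hL.isChain_isMinDeletion hL.2.2.2.1 hL.2.2.2.2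

lemma isMonotonePath_deleteMinPath (hK : K ⊆ Icc 1 n) :
    IsMonotonePath n K (deleteMinPath K) := by
  have hsub : ∀ A ∈ deleteMinPath K, A ⊆ Icc 1 n := fun A hA =>
    (subset_of_mem_deleteMinPath hA).trans hK
  have hchain := isChain_isMinDeletion_deleteMinPath K
  refine ⟨hsub, ?_, ?_, head?_deleteMinPath K, getLast?_deleteMinPath K⟩
  · exact hchain.imp fun A _ ⟨h, hB⟩ => hB ▸ cubeAdj_erase (A.min'_mem h)
  · exact hchain.imp_of_mem_imp fun A _ hA _ ⟨h, hB⟩ =>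
      hB ▸ gammaMin_lt_gammaMin_erase_min' (hsub A hA) h

end MonotonePath

lemma insert_one_subset_Icc {n : ℕ} (hn : 1 ≤ n) {J : Finset ℕ} (hJ : J ⊆ Icc 2 n) :
    insert 1 J ⊆ Icc 1 n :=
  insert_Icc_add_one_left_eq_Icc hn ▸ insert_subset_insert 1 hJ

lemma card_isMonotonePath_of_gammaMin_eq_one {n : ℕ} (hn : 1 ≤ n) :
    Nat.card {L : List (Finset ℕ) // ∃ K₀, gammaMin n K₀ = 1 ∧ IsMonotonePath n K₀ L} =
      2 ^ (n - 1) := by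
  let f (J : (Icc 2 n).powerset) :
      {L : List (Finset ℕ) // ∃ K₀, gammaMin n K₀ = 1 ∧ IsMonotonePath n K₀ L} :=
    have hK := insert_one_subset_Icc hn (mem_powerset.mp J.2)
    ⟨deleteMinPath (insert 1 J), insert 1 J, (gammaMin_eq_one_iff hn hK).2 (mem_insert_self 1 _),
      isMonotonePath_deleteMinPath hK⟩
  have hf : f.Bijective := by
    refine ⟨fun J J' hJJ' => Subtype.ext ?_, fun ⟨L, K, hK1, hL⟩ => ?_⟩
    · have one_notMem (J : (Icc 2 n).powerset) : 1 ∉ (J : Finset ℕ) := fun h1 => by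
        simpa using mem_powerset.mp J.2 h1
      rw [← erase_insert (one_notMem J), ← erase_insert (one_notMem J'),
        deleteMinPath_injective (congrArg Subtype.val hJJ')]
    · have hK := hL.subset_Icc
      refine ⟨⟨K.erase 1, mem_powerset.2 fun x hx => ?_⟩, Subtype.ext ?_⟩
      · have hx1 := ne_of_mem_erase hx
        have := mem_Icc.mp (hK (mem_of_mem_erase hx))
        exact mem_Icc.mpr ⟨by omega, this.2⟩
      · change deleteMinPath (insert 1 (K.erase 1)) = L
        rw [insert_erase ((gammaMin_eq_one_iff hn hK).1 hK1), hL.eq_deleteMinPath]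
  rw [← Nat.card_eq_of_bijective f hf, Nat.card_eq_finsetCard, card_powerset, Nat.card_Icc]
  rfl

/-- For every `J ⊆ {2,…,n}` there is exactly one `γ`-monotone path in the cube graph
from `{1} ∪ J` to `∅`; it is given by successively deleting the smallest remaining
element.  Consequently the `γ`-monotone paths from the minimizers of `γ` to `∅` are in
bijection with subsets of `{2,…,n}`: there are exactly `2^{n-1}` of them. -/
theorem monotone_paths_cube (n : ℕ) (hn : 1 ≤ n) :
    (∀ J : Finset ℕ, J ⊆ Finset.Icc 2 n →
      (∃! L : List (Finset ℕ), IsMonotonePath n (insert 1 J) L) ∧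
      (∀ L, IsMonotonePath n (insert 1 J) L →
        L.Chain' (fun K K' => ∃ h : K.Nonempty, K' = K.erase (K.min' h)))) ∧
    Nat.card {L : List (Finset ℕ) //
        ∃ K₀, gammaMin n K₀ = 1 ∧ IsMonotonePath n K₀ L} = 2 ^ (n - 1) := by
  refine ⟨fun J hJ => ⟨?_, fun L hL => hL.isChain_isMinDeletion⟩,
    card_isMonotonePath_of_gammaMin_eq_one hn⟩
  exact ⟨_, isMonotonePath_deleteMinPath (insert_one_subset_Icc hn hJ),
    fun L hL => hL.eq_deleteMinPath⟩
end

section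
/- Let S₁ ⊆ S₃ with S₃ = {1, ..., m} cyclically ordered, S₂ = S₃ \ S₁ totally ordered as s_1 < s_2 < ... < s_r, and σ : S₁ ⊔ S₂ → S₃ the inclusion (a cyclic r-insertion). Extend the order to S₁ ⊔ S₂ by declaring every element of S₁ less than every element of S₂. Then for each s_k ∈ S₂ the element m_σ(s_k) — the unique element s' < s_k such that every element of S₃ strictly between σ(s') and σ(s_k) in the cyclic order has σ-preimage greater than s_k — exists and is unique, provided S₁ ≠ ∅. -/
/-- The strict betweenness relation of the standard cyclic order on `Fin m`:
`b` lies strictly between `a` and `c` going counterclockwise. -/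
def CycSBtw {m : ℕ} (a b c : Fin m) : Prop :=
  (a < b ∧ b < c) ∨ (b < c ∧ c < a) ∨ (c < a ∧ a < b)

/-- Existence and uniqueness of `m_σ(s)`: let `S₃ = Fin m` be cyclically ordered,
`S₁ ⊆ S₃` nonempty, `S₂ = S₃ \ S₁` with its induced total order, `σ` the inclusion,
and extend the order to `S₁ ⊔ S₂` by putting every element of `S₁` below every
element of `S₂`.  Then for each `s ∈ S₂` there is a unique element `s' < s` such
that every element of `S₃` strictly between `s'` and `s` in the cyclic order has
preimage greater than `s`. -/
theorem m_sigma_exists_unique (m : ℕ) (S₁ : Finset (Fin m)) (hS₁ : S₁.Nonempty)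
    (s : Fin m) (hs : s ∉ S₁) :
    ∃! s' : Fin m,
      (s' ∈ S₁ ∨ (s' ∉ S₁ ∧ s' < s)) ∧
      ∀ t : Fin m, CycSBtw s' t s → (t ∉ S₁ ∧ s < t) := by
  -- backward cyclic distance from `s`
  set d : Fin m → ℕ := fun x => if x.val ≤ s.val then s.val - x.val else s.val + m - x.val
    with hd
  have hdinj : ∀ x y : Fin m, d x = d y → x = y := by
    intro x y h
    have hx := x.isLt; have hy := y.isLt; have hss := s.isLt
    apply Fin.ext
    simp only [hd] at h
    split_ifs at h <;> omega
  have hd0 : ∀ x : Fin m, d x = 0 → x = s := by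
    intro x h
    have hx := x.isLt; have hss := s.isLt
    apply Fin.ext
    simp only [hd] at h
    split_ifs at h <;> omega
  have hiff : ∀ s' t : Fin m, s' ≠ s → (CycSBtw s' t s ↔ 0 < d t ∧ d t < d s') := by
    intro s' t hne
    have hne' : s'.val ≠ s.val := fun h => hne (Fin.ext h)
    have ht := t.isLt; have hs' := s'.isLt; have hss := s.isLt
    simp only [CycSBtw, Fin.lt_def, hd]
    split_ifs <;> omega
  set A : Finset (Fin m) := S₁ ∪ Finset.Iio s with hA
  have hmemA : ∀ x, x ∈ A ↔ (x ∈ S₁ ∨ (x ∉ S₁ ∧ x < s)) := by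
    intro x
    simp only [hA, Finset.mem_union, Finset.mem_Iio]
    tauto
  have hsA : s ∉ A := by
    simp [hA, hs]
  have hAne : A.Nonempty := hS₁.mono Finset.subset_union_left
  set B : Finset ℕ := A.image d with hB
  have hBne : B.Nonempty := hAne.image d
  set N : ℕ := B.min' hBne with hN
  obtain ⟨s', hs'A, hds'⟩ := Finset.mem_image.mp (B.min'_mem hBne)
  have hs'ne : s' ≠ s := fun h => hsA (h ▸ hs'A)
  have hNpos : 0 < N := by
    rcases Nat.eq_zero_or_pos N with h | h
    · exact absurd (hd0 s' (hds'.trans h)) hs'ne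
    · exact h
  refine ⟨s', ⟨(hmemA s').mp hs'A, ?_⟩, ?_⟩
  · -- every t strictly between s' and s is not in A
    intro t hbtw
    rw [hiff s' t hs'ne] at hbtw
    have htA : t ∉ A := by
      intro htA
      have : N ≤ d t := B.min'_le _ (Finset.mem_image_of_mem d htA)
      omega
    have htne : t ≠ s := fun h => by
      have : d t = 0 := by rw [h]; simp [hd]
      omega
    have := (hmemA t).not.mp htA
    push_neg at this
    exact ⟨this.1, lt_of_le_of_ne (this.2 this.1) (Ne.symm htne)⟩
  · -- uniqueness
    intro s'' ⟨h1, h2⟩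
    have hs''A : s'' ∈ A := (hmemA s'').mpr h1
    have hs''ne : s'' ≠ s := fun h => hsA (h ▸ hs''A)
    have hle : N ≤ d s'' := B.min'_le _ (Finset.mem_image_of_mem d hs''A)
    rcases eq_or_lt_of_le hle with h | h
    · exact (hdinj _ _ (hds'.trans h)).symm
    · -- then s' lies strictly between s'' and s, contradiction
      have hbtw : CycSBtw s'' s' s := (hiff s'' s' hs''ne).mpr ⟨by omega, by omega⟩
      rcases (hmemA s').mp hs'A with h' | ⟨_, h'⟩
      · exact absurd h' (h2 s' hbtw).1
      · exact absurd h' (lt_asymm (h2 s' hbtw).2)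
end

section
/- With notation as above (S₁ nonempty, S₂ totally ordered, σ a cyclic |S₂|-insertion into S₃, partial order < extending the S₂-order with S₁ below S₂), the incidence graph I_{σ,<} = {(σ(s), σ(m_σ(s))) : s ∈ S₂}, viewed as a graph on the vertex set S₃ with an edge for each s ∈ S₂, is a forest in which every connected component contains exactly one element of σ(S₁); in particular I_{σ,<} has exactly |S₂| edges and no cycles, and if the graph together with σ(S₁) collapsed to a point is considered, it is a tree. -/
open SimpleGraph Relation

namespace ParentForest

variable {V : Type*} {S : Set V} {μ : V → V}

def parentRel (S : Set V) (μ : V → V) (x y : V) : Prop := x ∉ S ∧ y = μ x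

lemma reflTransGen_iff_of_parentRel {x y s : V} (hxy : parentRel S μ x y) (hs : s ∈ S) :
    ReflTransGen (parentRel S μ) x s ↔ ReflTransGen (parentRel S μ) y s := by
  refine ⟨fun hxs => ?_, ReflTransGen.head hxy⟩
  rcases hxs.cases_head with rfl | ⟨z, hxz, hzs⟩
  · exact absurd hs hxy.1
  · rwa [hxy.2, ← hxz.2]

lemma eq_of_reflTransGen_of_mem {x y : V} (hx : x ∈ S) (h : ReflTransGen (parentRel S μ) x y) :
    x = y :=
  h.cases_head.resolve_right fun ⟨_, hxz, _⟩ => hxz.1 hx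

lemma reflTransGen_iff_of_reachable {x y s : V}
    (h : (fromRel (parentRel S μ)).Reachable x y) (hs : s ∈ S) :
    ReflTransGen (parentRel S μ) x s ↔ ReflTransGen (parentRel S μ) y s := by
  rw [reachable_iff_reflTransGen] at h
  induction h with
  | refl => rfl
  | tail _ hyz ih =>
    rw [ih]
    rcases ((fromRel_adj _ _ _).mp hyz).2 with hyz | hzy
    · exact reflTransGen_iff_of_parentRel hyz hs
    · exact (reflTransGen_iff_of_parentRel hzy hs).symm

section Rank

variable {r : V → ℕ} (hr : ∀ x ∉ S, r (μ x) < r x)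
include hr

lemma adj_of_parentRel {x y : V} (h : parentRel S μ x y) : (fromRel (parentRel S μ)).Adj x y :=
  (fromRel_adj _ _ _).mpr ⟨fun hxy => (hr x h.1).ne (by rw [← h.2, hxy]), .inl h⟩

lemma reachable_of_reflTransGen {x y : V} (h : ReflTransGen (parentRel S μ) x y) :
    (fromRel (parentRel S μ)).Reachable x y :=
  (reachable_iff_reflTransGen x y).mpr (ReflTransGen.mono (fun _ _ => adj_of_parentRel hr) _ _ h)

lemma parentRel_of_adj_of_rank_le {x y : V} (hxy : (fromRel (parentRel S μ)).Adj x y)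
    (hle : r y ≤ r x) : parentRel S μ x y := by
  rcases ((fromRel_adj _ _ _).mp hxy).2 with h | ⟨hy, rfl⟩
  · exact h
  · exact absurd (hr y hy) hle.not_gt

theorem isAcyclic : (fromRel (parentRel S μ)).IsAcyclic := by
  classical
  intro u c hc
  obtain ⟨v, hv, hmax⟩ := c.support.toFinset.exists_max_image r ⟨u, by simp⟩
  rw [List.mem_toFinset] at hv
  have hc' := hc.rotate hv
  have hle : ∀ w ∈ (c.rotate v hv).support, r w ≤ r v := fun w hw =>
    hmax w (by simpa using hw)
  -- both neighbours of `v` on the cycle have rank at most `r v`, so both are `μ v`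
  apply hc'.snd_ne_penultimate
  rw [(parentRel_of_adj_of_rank_le hr (Walk.adj_snd hc'.not_nil)
      (hle _ (Walk.getVert_mem_support _ _))).2,
    (parentRel_of_adj_of_rank_le hr (Walk.adj_penultimate hc'.not_nil).symm
      (hle _ (Walk.getVert_mem_support _ _))).2]

lemma exists_mem_reflTransGen (x : V) : ∃ s ∈ S, ReflTransGen (parentRel S μ) x s := by
  induction hn : r x using Nat.strong_induction_on generalizing x with
  | _ n ih =>
    by_cases hx : x ∈ S
    · exact ⟨x, hx, .refl⟩
    · obtain ⟨s, hs, hμs⟩ := ih _ (hn ▸ hr x hx) (μ x) rfl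
      exact ⟨s, hs, ReflTransGen.head ⟨hx, rfl⟩ hμs⟩

theorem existsUnique_mem_connectedComponentMk (c : (fromRel (parentRel S μ)).ConnectedComponent) :
    ∃! s, s ∈ S ∧ (fromRel (parentRel S μ)).connectedComponentMk s = c := by
  induction c using ConnectedComponent.ind with
  | h x =>
    obtain ⟨s, hs, hxs⟩ := exists_mem_reflTransGen hr x
    refine ⟨s, ⟨hs, ConnectedComponent.sound (reachable_of_reflTransGen hr hxs).symm⟩, ?_⟩
    rintro t ⟨ht, htx⟩
    exact eq_of_reflTransGen_of_mem ht
      ((reflTransGen_iff_of_reachable (ConnectedComponent.exact htx) hs).mpr hxs)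

lemma edgeSet_eq_image : (fromRel (parentRel S μ)).edgeSet = (fun x => s(x, μ x)) '' Sᶜ := by
  refine Set.Subset.antisymm (fun e he => ?_) ?_
  · induction e using Sym2.ind with
    | h a b =>
      rcases ((fromRel_adj _ a b).mp he).2 with ⟨ha, rfl⟩ | ⟨hb, rfl⟩
      · exact ⟨a, ha, rfl⟩
      · exact ⟨b, hb, Sym2.eq_swap⟩
  · rintro _ ⟨x, hx, rfl⟩
    exact adj_of_parentRel hr ⟨hx, rfl⟩

theorem ncard_edgeSet : (fromRel (parentRel S μ)).edgeSet.ncard = Sᶜ.ncard := by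
  rw [edgeSet_eq_image hr]
  refine Set.InjOn.ncard_image fun x hx y hy hxy => ?_
  rcases Sym2.eq_iff.mp hxy with ⟨h, -⟩ | ⟨hx_eq, hy_eq⟩
  · exact h
  · have hrx := hr x hx
    have hry := hr y hy
    rw [hy_eq] at hrx
    rw [← hx_eq] at hry
    exact absurd hrx hry.not_gt

end Rank

end ParentForest

/-- `S₁` below `S₂`, and `S₂` ordered as in `Fin m`. -/
def insertionRank {m : ℕ} (S₁ : Finset (Fin m)) (x : Fin m) : ℕ := if x ∈ S₁ then 0 else x + 1

lemma insertionRank_lt {m : ℕ} {S₁ : Finset (Fin m)} {μ : Fin m → Fin m}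
    (hμ : ∀ s ∉ S₁, μ s ∈ S₁ ∨ (μ s ∉ S₁ ∧ μ s < s)) (s : Fin m) (hs : s ∉ S₁) :
    insertionRank S₁ (μ s) < insertionRank S₁ s := by
  rcases hμ s hs with h | ⟨h, hlt⟩
  · simp [insertionRank, h, hs]
  · simpa [insertionRank, h, hs] using hlt

theorem incidence_graph_is_forest_general (m : ℕ) (S₁ : Finset (Fin m))
    (μ : Fin m → Fin m)
    (hμ : ∀ s ∉ S₁,
      (μ s ∈ S₁ ∨ (μ s ∉ S₁ ∧ μ s < s)) ∧
      ∀ t : Fin m, CycSBtw (μ s) t s → (t ∉ S₁ ∧ s < t)) :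
    (SimpleGraph.fromRel (fun x y => x ∉ S₁ ∧ y = μ x)).IsAcyclic ∧
    (∀ c : (SimpleGraph.fromRel (fun x y : Fin m => x ∉ S₁ ∧ y = μ x)).ConnectedComponent,
      ∃! x : Fin m, x ∈ S₁ ∧
        (SimpleGraph.fromRel (fun x y : Fin m => x ∉ S₁ ∧ y = μ x)).connectedComponentMk x
          = c) ∧
    (SimpleGraph.fromRel (fun x y : Fin m => x ∉ S₁ ∧ y = μ x)).edgeSet.ncard
      = (S₁ᶜ : Finset (Fin m)).card := by
  have hr := insertionRank_lt fun s hs => (hμ s hs).1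
  refine ⟨ParentForest.isAcyclic hr, ParentForest.existsUnique_mem_connectedComponentMk hr,
    (ParentForest.ncard_edgeSet hr).trans ?_⟩
  rw [← Finset.coe_compl, Set.ncard_coe_finset]

/-- The incidence graph `I_{σ,<}`: with `S₁ ⊆ Fin m` nonempty, `S₂ = S₁ᶜ` with the
induced total order, `σ` the inclusion (a cyclic `|S₂|`-insertion), and `μ s = m_σ(s)`
the function characterized as in the definition of the incidence graph, the graph on
`Fin m` with one edge `{s, μ s}` for each `s ∈ S₂` is a forest whose connected
components each contain exactly one element of `S₁`; in particular it has exactly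
`|S₂|` edges and no cycles. -/
theorem incidence_graph_is_forest (m : ℕ) (S₁ : Finset (Fin m)) (hS₁ : S₁.Nonempty)
    (μ : Fin m → Fin m)
    (hμ : ∀ s ∉ S₁,
      (μ s ∈ S₁ ∨ (μ s ∉ S₁ ∧ μ s < s)) ∧
      ∀ t : Fin m, CycSBtw (μ s) t s → (t ∉ S₁ ∧ s < t)) :
    (SimpleGraph.fromRel (fun x y => x ∉ S₁ ∧ y = μ x)).IsAcyclic ∧
    (∀ c : (SimpleGraph.fromRel (fun x y : Fin m => x ∉ S₁ ∧ y = μ x)).ConnectedComponent,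
      ∃! x : Fin m, x ∈ S₁ ∧
        (SimpleGraph.fromRel (fun x y : Fin m => x ∉ S₁ ∧ y = μ x)).connectedComponentMk x
          = c) ∧
    (SimpleGraph.fromRel (fun x y : Fin m => x ∉ S₁ ∧ y = μ x)).edgeSet.ncard
      = (S₁ᶜ : Finset (Fin m)).card :=
  incidence_graph_is_forest_general m S₁ μ hμ
end

section
/- Let Q = [0, n+1], A = {0, ..., n+1}, and let η : A → ℝ be a function. Say η induces the subdivision with breakpoints K = {0 = k_0 < k_1 < ... < k_m = n+1} ⊆ A if the slopes η'_{k_i,k_{i+1}} := (η(k_{i+1}) − η(k_i))/(k_{i+1} − k_i) are strictly increasing in i, and for every a ∈ A \ K with k_i < a < k_{i+1}, η(a) > η(k_i) + η'_{k_i,k_{i+1}}·(a − k_i). Then for every subset K containing 0 and n+1 there exists an integer-valued η inducing the subdivision K with all slopes η'_{k_i,k_{i+1}} integers. -/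
/-- `a` and `b` are consecutive elements of `K`. -/
def ConsecIn (K : Finset ℤ) (a b : ℤ) : Prop :=
  a ∈ K ∧ b ∈ K ∧ a < b ∧ ∀ c ∈ K, ¬(a < c ∧ c < b)

/-- The slope of `η` between `a` and `b`. -/
def slopeOf (η : ℤ → ℤ) (a b : ℤ) : ℚ :=
  ((η b - η a : ℤ) : ℚ) / ((b - a : ℤ) : ℚ)

lemma slope_sq_bump (K : Finset ℤ) (C : ℤ) {a b : ℤ} (h : ConsecIn K a b) :
    slopeOf (fun x => x * x + if x ∈ K then 0 else C) a b = ((a + b : ℤ) : ℚ) := by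
  obtain ⟨ha, hb, hab, -⟩ := h
  have hne : ((b - a : ℤ) : ℚ) ≠ 0 := by
    exact_mod_cast sub_ne_zero.mpr (ne_of_gt hab)
  simp only [slopeOf, if_pos ha, if_pos hb, add_zero]
  rw [div_eq_iff hne]
  push_cast
  ring

/-- For every subset `K ⊆ {0,…,n+1}` containing `0` and `n+1` there exists an
integer-valued height function `η` inducing the subdivision of `[0, n+1]` with
breakpoint set `K`, with all edge slopes integers: the slopes on consecutive cells
are integral and strictly increasing, and at every non-breakpoint `a ∈ A` the value
`η(a)` lies strictly above the lower convex hull. -/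
theorem exists_integral_height_function (n : ℕ) (K : Finset ℤ)
    (hK : K ⊆ Finset.Icc 0 ((n : ℤ) + 1)) (h0 : (0 : ℤ) ∈ K)
    (h1 : (n : ℤ) + 1 ∈ K) :
    ∃ η : ℤ → ℤ,
      (∀ a b : ℤ, ConsecIn K a b → ∃ z : ℤ, slopeOf η a b = (z : ℚ)) ∧
      (∀ a b c : ℤ, ConsecIn K a b → ConsecIn K b c →
        slopeOf η a b < slopeOf η b c) ∧
      (∀ a b : ℤ, ConsecIn K a b → ∀ x : ℤ, a < x → x < b →
        ((η x : ℚ) > (η a : ℚ) + slopeOf η a b * ((x - a : ℤ) : ℚ))) := by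
  set C : ℤ := ((n : ℤ) + 1) ^ 2 + 1 with hC
  refine ⟨fun x => x * x + if x ∈ K then 0 else C, ?_, ?_, ?_⟩
  · intro a b h
    exact ⟨a + b, slope_sq_bump K C h⟩
  · intro a b c hab hbc
    rw [slope_sq_bump K C hab, slope_sq_bump K C hbc]
    have : a < c := lt_trans hab.2.2.1 hbc.2.2.1
    have h' : (a : ℚ) < (c : ℚ) := by exact_mod_cast this
    push_cast
    linarith
  · intro a b h x hax hxb
    have hxK : x ∉ K := fun hx => h.2.2.2 x hx ⟨hax, hxb⟩
    rw [slope_sq_bump K C h]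
    simp only [if_pos h.1, if_neg hxK, add_zero]
    have ha0 : (0 : ℤ) ≤ a := (Finset.mem_Icc.mp (hK h.1)).1
    have hb1 : b ≤ (n : ℤ) + 1 := (Finset.mem_Icc.mp (hK h.2.1)).2
    have key : a * a + (a + b) * (x - a) < x * x + C := by
      have h1' : x - a ≤ (n : ℤ) + 1 := by linarith
      have h2' : b - x ≤ (n : ℤ) + 1 := by linarith
      have h3' : (0 : ℤ) < x - a := by linarith
      have h4' : (0 : ℤ) < b - x := by linarith
      have : (x - a) * (b - x) ≤ ((n : ℤ) + 1) * ((n : ℤ) + 1) :=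
        mul_le_mul h1' h2' h4'.le (by linarith)
      nlinarith
    have key' : ((a * a + (a + b) * (x - a) : ℤ) : ℚ) < ((x * x + C : ℤ) : ℚ) := by
      exact_mod_cast key
    push_cast at key' ⊢
    linarith
end
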